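/- Let n ≥ 3 and let R = ℤ₂[h, r]/(h^(2^n), 2r, h·r^(2^(n−2)), r·h^(2^(n−1)), r^(2^(n−1))) with deg h = 2, deg r = 4. Then the free part of R as a ℤ₂-module has rank 2^n (spanned by 1, h, ..., h^(2^n − 1)), and the torsion submodule is an elementary abelian 2-group. -/

import Mathlib

set_option synthInstance.maxHeartbeats 400000
set_option maxHeartbeats 800000

open MvPolynomial

/-- `R = ℤ₂[h, r]/(h^(2^n), 2r, h·r^(2^(n−2)), r·h^(2^(n−1)), r^(2^(n−1)))`,
with `h = X 0`, `r = X 1`. -/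
noncomputable abbrev RQnorm (n : ℕ) : Type :=
  MvPolynomial (Fin 2) ℤ_[2] ⧸
    Ideal.span ({X 0 ^ (2 ^ n), 2 * X 1, X 0 * X 1 ^ (2 ^ (n - 2)),
      X 1 * X 0 ^ (2 ^ (n - 1)), X 1 ^ (2 ^ (n - 1))} :
      Set (MvPolynomial (Fin 2) ℤ_[2]))

namespace RQAux

/-- The defining ideal. -/
noncomputable abbrev In (n : ℕ) : Ideal (MvPolynomial (Fin 2) ℤ_[2]) :=
  Ideal.span ({X 0 ^ (2 ^ n), 2 * X 1, X 0 * X 1 ^ (2 ^ (n - 2)),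
      X 1 * X 0 ^ (2 ^ (n - 1)), X 1 ^ (2 ^ (n - 1))} :
      Set (MvPolynomial (Fin 2) ℤ_[2]))

/-- Target: `ℤ₂[X]/(X^(2^n))`. -/
noncomputable abbrev Sn (n : ℕ) : Type :=
  AdjoinRoot ((Polynomial.X : Polynomial ℤ_[2]) ^ 2 ^ n)

/-- substitute `h ↦ root, r ↦ 0`. -/
noncomputable def psi (n : ℕ) : MvPolynomial (Fin 2) ℤ_[2] →ₐ[ℤ_[2]] Sn n :=
  MvPolynomial.aeval ![AdjoinRoot.root _, 0]

lemma psi_gens (n : ℕ) : ∀ a ∈ In n, psi n a = 0 := by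
  intro a ha
  have hker : In n ≤ RingHom.ker (psi n).toRingHom := by
    rw [Ideal.span_le]
    intro p hp
    simp only [Set.mem_insert_iff, Set.mem_singleton_iff] at hp
    have hroot : (AdjoinRoot.root ((Polynomial.X : Polynomial ℤ_[2]) ^ 2 ^ n)) ^ 2 ^ n = 0 := by
      rw [show (AdjoinRoot.root ((Polynomial.X : Polynomial ℤ_[2]) ^ 2 ^ n))
          = AdjoinRoot.mk _ Polynomial.X from rfl, ← map_pow, AdjoinRoot.mk_self]
    have hne : ∀ k : ℕ, (2 : ℕ) ^ k ≠ 0 := fun k => pow_ne_zero k two_ne_zero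
    rcases hp with rfl | rfl | rfl | rfl | rfl <;>
      simp [psi, RingHom.mem_ker, hroot, zero_pow, hne]
  exact hker ha

/-- `ψ` descended to the quotient. -/
noncomputable def psibar (n : ℕ) : RQnorm n →ₐ[ℤ_[2]] Sn n :=
  Ideal.Quotient.liftₐ (In n) (psi n) (psi_gens n)

@[simp] lemma psibar_mk (n : ℕ) (p : MvPolynomial (Fin 2) ℤ_[2]) :
    psibar n (Ideal.Quotient.mk (In n) p) = psi n p := by
  simp [psibar]
  rfl

/-- substitute `r ↦ 0`, landing in one variable. -/
noncomputable def down : MvPolynomial (Fin 2) ℤ_[2] →ₐ[ℤ_[2]] Polynomial ℤ_[2] :=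
  MvPolynomial.aeval ![Polynomial.X, 0]

/-- one variable back into two. -/
noncomputable def toMv : Polynomial ℤ_[2] →ₐ[ℤ_[2]] MvPolynomial (Fin 2) ℤ_[2] :=
  Polynomial.aeval (X 0)

lemma mk_down (n : ℕ) (p : MvPolynomial (Fin 2) ℤ_[2]) :
    AdjoinRoot.mk ((Polynomial.X : Polynomial ℤ_[2]) ^ 2 ^ n) (down p) = psi n p := by
  have h : ((AdjoinRoot.mk ((Polynomial.X : Polynomial ℤ_[2]) ^ 2 ^ n)).comp
      down.toRingHom) = (psi n).toRingHom := by
    apply MvPolynomial.ringHom_ext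
    · intro r
      simp [down, psi, MvPolynomial.aeval_C]
    · intro i
      fin_cases i <;> simp [down, psi]
  exact RingHom.congr_fun h p

lemma sub_toMv_down_mem (p : MvPolynomial (Fin 2) ℤ_[2]) :
    p - toMv (down p) ∈ Ideal.span ({X 1} : Set (MvPolynomial (Fin 2) ℤ_[2])) := by
  rw [← Ideal.Quotient.eq_zero_iff_mem, map_sub, sub_eq_zero]
  have h : ((Ideal.Quotient.mkₐ ℤ_[2]
        (Ideal.span ({X 1} : Set (MvPolynomial (Fin 2) ℤ_[2])))).comp
        (toMv.comp down))
      = Ideal.Quotient.mkₐ ℤ_[2] (Ideal.span ({X 1} : Set (MvPolynomial (Fin 2) ℤ_[2]))) := by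
    apply MvPolynomial.algHom_ext
    intro i
    fin_cases i
    · simp [down, toMv]
    · simp only [AlgHom.comp_apply, down, toMv, MvPolynomial.aeval_X]
      simp [Ideal.Quotient.eq_zero_iff_mem, Ideal.subset_span]
  exact (AlgHom.congr_fun h p).symm

lemma two_smul_of_psibar_eq_zero (n : ℕ) (x : RQnorm n) (hx : psibar n x = 0) :
    (2 : ℤ_[2]) • x = 0 := by
  obtain ⟨p, rfl⟩ := Ideal.Quotient.mk_surjective x
  rw [psibar_mk] at hx
  -- `down p` is divisible by `X ^ 2^n`
  have hdp : ((Polynomial.X : Polynomial ℤ_[2]) ^ 2 ^ n) ∣ down p := by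
    rw [← AdjoinRoot.mk_eq_zero, mk_down, hx]
  obtain ⟨u, hu⟩ := hdp
  obtain ⟨t, ht⟩ := Ideal.mem_span_singleton'.mp (sub_toMv_down_mem p)
  have h2p : (2 : MvPolynomial (Fin 2) ℤ_[2]) * p
      = t * (2 * X 1) + (2 * toMv u) * (X 0 ^ 2 ^ n) := by
    have htm : toMv (down p) = X 0 ^ 2 ^ n * toMv u := by
      rw [hu, map_mul, map_pow, toMv, Polynomial.aeval_X]
    have : p = t * X 1 + toMv (down p) := by rw [ht]; ring
    rw [this, htm]; ring
  have hmem : (2 : MvPolynomial (Fin 2) ℤ_[2]) * p ∈ In n := by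
    rw [h2p]
    refine Ideal.add_mem _ (Ideal.mul_mem_left _ _ ?_) (Ideal.mul_mem_left _ _ ?_)
    · exact Ideal.subset_span (by simp)
    · exact Ideal.subset_span (by simp)
  have hC : (MvPolynomial.C (2 : ℤ_[2]) : MvPolynomial (Fin 2) ℤ_[2]) = 2 :=
    map_ofNat MvPolynomial.C 2
  have : (2 : ℤ_[2]) • Ideal.Quotient.mk (In n) p
      = Ideal.Quotient.mk (In n) ((2 : MvPolynomial (Fin 2) ℤ_[2]) * p) := by
    rw [show (2 : ℤ_[2]) • Ideal.Quotient.mk (In n) p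
        = Ideal.Quotient.mkₐ ℤ_[2] (In n) ((2 : ℤ_[2]) • p) from
      (map_smul (Ideal.Quotient.mkₐ ℤ_[2] (In n)) _ _).symm]
    rw [MvPolynomial.smul_eq_C_mul, hC, Ideal.Quotient.mkₐ_eq_mk]
  rw [this, Ideal.Quotient.eq_zero_iff_mem]
  exact hmem

lemma torsion_le_ker (n : ℕ) :
    Submodule.torsion ℤ_[2] (RQnorm n) ≤ LinearMap.ker (psibar n).toLinearMap := by
  intro x hx
  obtain ⟨⟨a, ha⟩, hax⟩ := hx
  have hane : a ≠ 0 := nonZeroDivisors.ne_zero ha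
  have hax' : a • x = 0 := hax
  have h0 : a • (psibar n) x = 0 := by
    rw [← map_smul, hax', map_zero]
  haveI : Module.Free ℤ_[2] (Sn n) :=
    Module.Free.of_basis (AdjoinRoot.powerBasis' (Polynomial.monic_X_pow _)).basis
  rw [LinearMap.mem_ker]
  rcases smul_eq_zero.mp h0 with h | h
  · exact absurd h hane
  · exact h

lemma ker_le_torsion (n : ℕ) :
    LinearMap.ker (psibar n).toLinearMap ≤ Submodule.torsion ℤ_[2] (RQnorm n) := by
  intro x hx
  refine ⟨⟨2, mem_nonZeroDivisors_of_ne_zero (by norm_num)⟩, ?_⟩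
  exact two_smul_of_psibar_eq_zero n x (LinearMap.mem_ker.mp hx)

lemma ker_eq_torsion (n : ℕ) :
    LinearMap.ker (psibar n).toLinearMap = Submodule.torsion ℤ_[2] (RQnorm n) :=
  le_antisymm (ker_le_torsion n) (torsion_le_ker n)

lemma psibar_surjective (n : ℕ) : Function.Surjective (psibar n) := by
  intro y
  obtain ⟨q, rfl⟩ := AdjoinRoot.mk_surjective y
  refine ⟨Ideal.Quotient.mk (In n) (toMv q), ?_⟩
  rw [psibar_mk, ← mk_down n (toMv q)]
  congr 1
  rw [toMv, down]
  induction q using Polynomial.induction_on with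
  | C a => simp [MvPolynomial.aeval_C]
  | add p q hp hq => simp [hp, hq]
  | monomial k a h => simp_all [pow_succ, mul_assoc, mul_left_comm]

end RQAux

/-- For `n ≥ 3`, the free part of `R` as a `ℤ₂`-module has rank `2^n`, spanned by
`1, h, ..., h^(2^n − 1)`, and the torsion submodule is an elementary abelian
`2`-group. -/
theorem etale_cohomology_norm_quadric_structure (n : ℕ) (hn : 3 ≤ n) :
    Nonempty ((RQnorm n ⧸ Submodule.torsion ℤ_[2] (RQnorm n)) ≃ₗ[ℤ_[2]]
      (Fin (2 ^ n) → ℤ_[2])) ∧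
    (Submodule.span ℤ_[2]
        (Set.range fun j : Fin (2 ^ n) => (Ideal.Quotient.mk _ (X 0 ^ (j : ℕ)) : RQnorm n)) ⊔
      Submodule.torsion ℤ_[2] (RQnorm n) = ⊤) ∧
    (∀ x ∈ Submodule.torsion ℤ_[2] (RQnorm n), (2 : ℤ_[2]) • x = 0) := by
  classical
  set pb := AdjoinRoot.powerBasis'
      (Polynomial.monic_X_pow (R := ℤ_[2]) (n := 2 ^ n)) with hpb
  have hd : pb.dim = 2 ^ n := by
    simp [hpb, Polynomial.natDegree_X_pow]
  have hgen : ∀ j : ℕ, RQAux.psibar n (Ideal.Quotient.mk (RQAux.In n) (X 0 ^ j))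
      = pb.gen ^ j := by
    intro j
    rw [RQAux.psibar_mk, map_pow]
    congr 1
    simp [RQAux.psi, hpb]
  refine ⟨?_, ?_, ?_⟩
  · -- the free quotient
    refine ⟨?_⟩
    refine (Submodule.quotEquivOfEq _ _ (RQAux.ker_eq_torsion n).symm).trans
      (((RQAux.psibar n).toLinearMap.quotKerEquivOfSurjective
        (RQAux.psibar_surjective n)).trans
      (pb.basis.equivFun.trans (LinearEquiv.funCongrLeft ℤ_[2] ℤ_[2] (finCongr hd.symm))))
  · -- span of powers of h together with torsion is everything
    rw [eq_top_iff]
    intro x _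
    -- image of the powers spans the target
    have hspan : Submodule.span ℤ_[2]
        (Set.range fun j : Fin (2 ^ n) => pb.gen ^ (j : ℕ)) = ⊤ := by
      have h1 : (Set.range fun j : Fin (2 ^ n) => pb.gen ^ (j : ℕ))
          = Set.range pb.basis := by
        rw [show ⇑pb.basis = fun i : Fin pb.dim => pb.gen ^ (i : ℕ) from pb.coe_basis]
        ext y
        constructor
        · rintro ⟨j, rfl⟩; exact ⟨⟨j, lt_of_lt_of_eq j.2 hd.symm⟩, rfl⟩
        · rintro ⟨i, rfl⟩; exact ⟨⟨i, lt_of_lt_of_eq i.2 hd⟩, rfl⟩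
      rw [h1, pb.basis.span_eq]
    have hx : RQAux.psibar n x ∈ Submodule.map (RQAux.psibar n).toLinearMap
        (Submodule.span ℤ_[2] (Set.range fun j : Fin (2 ^ n) =>
          (Ideal.Quotient.mk (RQAux.In n) (X 0 ^ (j : ℕ)) : RQnorm n))) := by
      rw [Submodule.map_span, ← Set.range_comp]
      have : ((RQAux.psibar n).toLinearMap ∘ fun j : Fin (2 ^ n) =>
          (Ideal.Quotient.mk (RQAux.In n) (X 0 ^ (j : ℕ)) : RQnorm n))
          = fun j : Fin (2 ^ n) => pb.gen ^ (j : ℕ) := by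
        funext j; exact hgen j
      rw [this, hspan]
      trivial
    obtain ⟨y, hy, hyx⟩ := hx
    rw [Submodule.mem_sup]
    refine ⟨y, hy, x - y, ?_, by ring⟩
    apply RQAux.ker_le_torsion n
    rw [LinearMap.mem_ker, map_sub]
    simp only [AlgHom.toLinearMap_apply] at hyx ⊢
    rw [hyx, sub_self]
  · -- torsion is elementary abelian
    intro x hx
    exact RQAux.two_smul_of_psibar_eq_zero n x (RQAux.torsion_le_ker n hx)
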